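/- arXiv:1404.1296 — 2 statements merged into one kernel-verified Lean document; each statement's English description precedes it below -/
import Mathlib

section
/- Let (H,α) be a monoidal Hom-Hopf algebra over a commutative ring k. Define the right adjoint Hom-action by g◁h := (S(h₁)α⁻¹(g))α(h₂) for g,h ∈ H. Then ◁ makes (H,α) a right (H,α)-Hom-module over itself; explicitly, for all g,h,l ∈ H: α(g◁h)=α(g)◁α(h), α(g)◁(hl)=(g◁h)◁α(l), and g◁1=α(g). -/
/-!
Untwisting: with `a ⬝ b := α⁻¹(a b)` and `Δ' := Δ ∘ α`, the data `(H, ⬝, 1, Δ', ε, S)` form an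
ordinary Hopf algebra, so `S` is an anti-homomorphism for `⬝` and, since `S` commutes with `α`, also
`S (g h) = S h S g`. The Hom-module identities for `◁` are then Sweedler computations: `α`
is multiplicative and commutes with `S`; for `α(g) ◁ (h l)` one expands `Δ(h l) = h₁ l₁ ⊗ h₂ l₂`,
uses `S(h₁ l₁) = S(l₁) S(h₁)` and rebrackets by Hom-associativity; and `g ◁ 1` uses `S 1 = 1`.
-/

open TensorProduct

noncomputable def tmul2 {k A B C D E F : Type*} [CommRing k]
    [AddCommGroup A] [AddCommGroup B] [AddCommGroup C] [AddCommGroup D]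
    [AddCommGroup E] [AddCommGroup F]
    [Module k A] [Module k B] [Module k C] [Module k D] [Module k E] [Module k F]
    (f : A →ₗ[k] C →ₗ[k] E) (g : B →ₗ[k] D →ₗ[k] F) :
    (A ⊗[k] B) →ₗ[k] (C ⊗[k] D) →ₗ[k] (E ⊗[k] F) :=
  TensorProduct.curry
    ((TensorProduct.map (TensorProduct.lift f) (TensorProduct.lift g)) ∘ₗ
      (TensorProduct.tensorTensorTensorComm k A B C D).toLinearMap)

/-- A monoidal Hom-Hopf algebra over a commutative ring `k`. -/
structure MonHomHopf (k H : Type*) [CommRing k] [AddCommGroup H] [Module k H] where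
  α : H ≃ₗ[k] H
  mul : H →ₗ[k] H →ₗ[k] H
  one : H
  comul : H →ₗ[k] H ⊗[k] H
  counit : H →ₗ[k] k
  S : H →ₗ[k] H
  alpha_mul : ∀ g h, α (mul g h) = mul (α g) (α h)
  alpha_one : α one = one
  hom_assoc : ∀ g h l, mul (α g) (mul h l) = mul (mul g h) (α l)
  mul_one' : ∀ h, mul h one = α h
  one_mul' : ∀ h, mul one h = α h
  comul_alpha : ∀ h, comul (α h)
    = TensorProduct.map α.toLinearMap α.toLinearMap (comul h)
  counit_alpha : ∀ h, counit (α h) = counit h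
  hom_coassoc : ∀ h,
    (TensorProduct.assoc k H H H) ((TensorProduct.map comul α.symm.toLinearMap) (comul h))
      = (TensorProduct.map α.symm.toLinearMap comul) (comul h)
  counit_comul_left : ∀ h,
    (TensorProduct.lid k H) ((TensorProduct.map counit LinearMap.id) (comul h)) = α.symm h
  counit_comul_right : ∀ h,
    (TensorProduct.rid k H) ((TensorProduct.map LinearMap.id counit) (comul h)) = α.symm h
  comul_mul : ∀ g h, comul (mul g h) = tmul2 mul mul (comul g) (comul h)
  comul_one : comul one = one ⊗ₜ[k] one
  counit_mul : ∀ g h, counit (mul g h) = counit g * counit h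
  counit_one : counit one = 1
  antipode_left : ∀ h,
    (TensorProduct.lift mul) ((TensorProduct.map S LinearMap.id) (comul h)) = counit h • one
  antipode_right : ∀ h,
    (TensorProduct.lift mul) ((TensorProduct.map LinearMap.id S) (comul h)) = counit h • one
  S_alpha : ∀ h, S (α h) = α (S h)

/-- The right adjoint Hom-action `g ◁ h = (S(h₁) α⁻¹(g)) α(h₂)`, as a linear map in `h`. -/
noncomputable def MonHomHopf.adRL {k H : Type*} [CommRing k] [AddCommGroup H] [Module k H]
    (A : MonHomHopf k H) (g : H) : H →ₗ[k] H :=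
  (TensorProduct.lift
    ((A.mul.comp ((A.mul.flip (A.α.symm g)).comp A.S)).compl₂ A.α.toLinearMap)) ∘ₗ A.comul

@[simp] lemma tmul2_tmul {k A B C D E F : Type*} [CommRing k]
    [AddCommGroup A] [AddCommGroup B] [AddCommGroup C] [AddCommGroup D]
    [AddCommGroup E] [AddCommGroup F]
    [Module k A] [Module k B] [Module k C] [Module k D] [Module k E] [Module k F]
    (f : A →ₗ[k] C →ₗ[k] E) (g : B →ₗ[k] D →ₗ[k] F) (a : A) (b : B) (c : C) (d : D) :
    tmul2 f g (a ⊗ₜ b) (c ⊗ₜ d) = f a c ⊗ₜ g b d := by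
  simp [tmul2]

namespace MonHomHopf

variable {k H : Type*} [CommRing k] [AddCommGroup H] [Module k H] (A : MonHomHopf k H)

lemma alpha_symm_mul (g h : H) :
    A.α.symm (A.mul g h) = A.mul (A.α.symm g) (A.α.symm h) := by
  rw [A.α.symm_apply_eq, A.alpha_mul, A.α.apply_symm_apply, A.α.apply_symm_apply]

lemma S_alpha_symm (h : H) : A.S (A.α.symm h) = A.α.symm (A.S h) := by
  rw [A.α.eq_symm_apply, ← A.S_alpha, A.α.apply_symm_apply]

lemma untwisted_mul_assoc (a b c : H) :
    A.α.symm (A.mul (A.α.symm (A.mul a b)) c) = A.α.symm (A.mul a (A.α.symm (A.mul b c))) := by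
  have := A.hom_assoc (A.α.symm a) (A.α.symm b) (A.α.symm c)
  rw [A.α.apply_symm_apply, A.α.apply_symm_apply] at this
  rw [A.alpha_symm_mul a b, A.alpha_symm_mul b c, this]

lemma comul_alpha_coassoc (h : H) :
    TensorProduct.assoc k H H H (map (A.comul ∘ₗ A.α.toLinearMap) LinearMap.id (A.comul (A.α h)))
      = map LinearMap.id (A.comul ∘ₗ A.α.toLinearMap) (A.comul (A.α h)) := by
  have := A.hom_coassoc (A.α (A.α h))
  rwa [A.comul_alpha (A.α h), map_map, map_map, LinearEquiv.symm_comp] at this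

lemma comul_alpha_counit_left (h : H) :
    map A.counit LinearMap.id (A.comul (A.α h)) = 1 ⊗ₜ h := by
  rw [← TensorProduct.lid_symm_apply, LinearEquiv.eq_symm_apply, A.counit_comul_left,
    A.α.symm_apply_apply]

lemma comul_alpha_counit_right (h : H) :
    map LinearMap.id A.counit (A.comul (A.α h)) = h ⊗ₜ 1 := by
  rw [← TensorProduct.rid_symm_apply, LinearEquiv.eq_symm_apply, A.counit_comul_right,
    A.α.symm_apply_apply]

def Untwist (_A : MonHomHopf k H) : Type _ := H

instance : AddCommGroup A.Untwist := inferInstanceAs (AddCommGroup H)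

instance : Module k A.Untwist := inferInstanceAs (Module k H)

noncomputable instance : Ring A.Untwist where
  mul a b := A.α.symm (A.mul a b)
  one := A.one
  mul_assoc := A.untwisted_mul_assoc
  one_mul a := (congrArg A.α.symm (A.one_mul' a)).trans (A.α.symm_apply_apply a)
  mul_one a := (congrArg A.α.symm (A.mul_one' a)).trans (A.α.symm_apply_apply a)
  left_distrib a b c := (congrArg A.α.symm (map_add (A.mul a) b c)).trans (map_add _ _ _)
  right_distrib a b c :=
    (congrArg A.α.symm (LinearMap.map_add₂ A.mul a b c)).trans (map_add _ _ _)
  zero_mul a := (congrArg A.α.symm (LinearMap.map_zero₂ A.mul a)).trans (map_zero _)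
  mul_zero a := (congrArg A.α.symm (map_zero (A.mul a))).trans (map_zero _)

def toUntwist : H ≃ₗ[k] A.Untwist := LinearEquiv.refl k H

lemma toUntwist_mul (a b : H) :
    A.toUntwist (A.α.symm (A.mul a b)) = A.toUntwist a * A.toUntwist b := rfl

lemma toUntwist_one : A.toUntwist A.one = 1 := rfl

noncomputable instance : Algebra k A.Untwist := Algebra.ofModule
  (fun r a b => (congrArg A.α.symm (LinearMap.map_smul₂ A.mul r a b)).trans (map_smul _ _ _))
  (fun r a b => (congrArg A.α.symm (map_smul (A.mul a) r b)).trans (map_smul _ _ _))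

noncomputable instance : Coalgebra k A.Untwist where
  comul := A.comul ∘ₗ A.α.toLinearMap
  counit := A.counit
  coassoc := LinearMap.ext A.comul_alpha_coassoc
  rTensor_counit_comp_comul := LinearMap.ext A.comul_alpha_counit_left
  lTensor_counit_comp_comul := LinearMap.ext A.comul_alpha_counit_right

lemma comul_toUntwist (a : H) :
    Coalgebra.comul (R := k) (A.toUntwist a) =
      map A.toUntwist.toLinearMap A.toUntwist.toLinearMap (A.comul (A.α a)) :=
  (LinearMap.congr_fun TensorProduct.map_id _).symm

lemma counit_untwisted_mul (a b : H) :
    A.counit (A.α.symm (A.mul a b)) = A.counit a * A.counit b := by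
  rw [← A.counit_alpha, A.α.apply_symm_apply, A.counit_mul]

lemma map_toUntwist_map_alpha_mul (u v : H ⊗[k] H) :
    map A.toUntwist.toLinearMap A.toUntwist.toLinearMap (map A.α.toLinearMap A.α.toLinearMap u) *
      map A.toUntwist.toLinearMap A.toUntwist.toLinearMap (map A.α.toLinearMap A.α.toLinearMap v)
      = map A.toUntwist.toLinearMap A.toUntwist.toLinearMap (tmul2 A.mul A.mul u v) := by
  induction u using TensorProduct.induction_on with
  | zero => simp
  | tmul a b =>
    induction v using TensorProduct.induction_on with
    | zero => simp
    | tmul c d => simp [← toUntwist_mul, ← A.alpha_mul]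
    | add v₁ v₂ h₁ h₂ => simp only [map_add, mul_add, h₁, h₂]
  | add u₁ u₂ h₁ h₂ => simp only [map_add, add_mul, LinearMap.add_apply, h₁, h₂]

noncomputable instance : Bialgebra k A.Untwist :=
  Bialgebra.mk' k A.Untwist A.counit_one (A.counit_untwisted_mul _ _)
    ((congrArg A.comul A.alpha_one).trans A.comul_one) (by
      intro a b
      obtain ⟨a, rfl⟩ := A.toUntwist.surjective a
      obtain ⟨b, rfl⟩ := A.toUntwist.surjective b
      rw [← toUntwist_mul, comul_toUntwist, comul_toUntwist, comul_toUntwist,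
        A.α.apply_symm_apply, A.comul_mul, A.comul_alpha, A.comul_alpha,
        map_toUntwist_map_alpha_mul])

noncomputable instance : HopfAlgebraStruct k A.Untwist where
  antipode := A.S

lemma antipode_toUntwist (a : H) :
    HopfAlgebra.antipode k (A.toUntwist a) = A.toUntwist (A.S a) := rfl

lemma mul'_rTensor_antipode_toUntwist (t : H ⊗[k] H) :
    LinearMap.mul' k A.Untwist ((HopfAlgebra.antipode k).rTensor A.Untwist
        (map A.toUntwist.toLinearMap A.toUntwist.toLinearMap
          (map A.α.toLinearMap A.α.toLinearMap t)))
      = A.toUntwist (lift A.mul (map A.S LinearMap.id t)) := by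
  induction t using TensorProduct.induction_on with
  | zero => simp
  | tmul a b => simp [antipode_toUntwist, A.S_alpha, ← toUntwist_mul, ← A.alpha_mul]
  | add t₁ t₂ h₁ h₂ => simp only [map_add, h₁, h₂]

lemma mul'_lTensor_antipode_toUntwist (t : H ⊗[k] H) :
    LinearMap.mul' k A.Untwist ((HopfAlgebra.antipode k).lTensor A.Untwist
        (map A.toUntwist.toLinearMap A.toUntwist.toLinearMap
          (map A.α.toLinearMap A.α.toLinearMap t)))
      = A.toUntwist (lift A.mul (map LinearMap.id A.S t)) := by
  induction t using TensorProduct.induction_on with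
  | zero => simp
  | tmul a b => simp [antipode_toUntwist, A.S_alpha, ← toUntwist_mul, ← A.alpha_mul]
  | add t₁ t₂ h₁ h₂ => simp only [map_add, h₁, h₂]

noncomputable instance : HopfAlgebra k A.Untwist where
  toHopfAlgebraStruct := inferInstance
  mul_antipode_rTensor_comul := LinearMap.ext <| A.toUntwist.surjective.forall.2 fun a => by
    simp only [LinearMap.comp_apply, comul_toUntwist, A.comul_alpha,
      mul'_rTensor_antipode_toUntwist, A.antipode_left]
    rfl
  mul_antipode_lTensor_comul := LinearMap.ext <| A.toUntwist.surjective.forall.2 fun a => by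
    simp only [LinearMap.comp_apply, comul_toUntwist, A.comul_alpha,
      mul'_lTensor_antipode_toUntwist, A.antipode_right]
    rfl

lemma S_mul (a b : H) : A.S (A.mul a b) = A.mul (A.S b) (A.S a) := by
  have := HopfAlgebra.antipode_mul_antidistrib (R := k) (A.toUntwist a) (A.toUntwist b)
  rw [← toUntwist_mul, antipode_toUntwist, antipode_toUntwist, antipode_toUntwist,
    ← toUntwist_mul, A.toUntwist.injective.eq_iff, S_alpha_symm] at this
  exact A.α.symm.injective this

lemma S_one : A.S A.one = A.one := HopfAlgebra.antipode_one (R := k) (A := A.Untwist)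

noncomputable def adjointSummand (g : H) : H →ₗ[k] H →ₗ[k] H :=
  (A.mul.comp ((A.mul.flip (A.α.symm g)).comp A.S)).compl₂ A.α.toLinearMap

lemma adjointSummand_apply (g x y : H) :
    A.adjointSummand g x y = A.mul (A.mul (A.S x) (A.α.symm g)) (A.α y) := rfl

lemma adRL_eq_lift (g h : H) : A.adRL g h = lift (A.adjointSummand g) (A.comul h) := rfl

lemma alpha_lift_adjointSummand (g : H) (t : H ⊗[k] H) :
    A.α (lift (A.adjointSummand g) t)
      = lift (A.adjointSummand (A.α g)) (map A.α.toLinearMap A.α.toLinearMap t) := by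
  induction t using TensorProduct.induction_on with
  | zero => simp
  | tmul x y => simp [adjointSummand_apply, A.alpha_mul, A.S_alpha]
  | add t₁ t₂ h₁ h₂ => simp only [map_add, h₁, h₂]

lemma adjointSummand_adjointSummand (g h₁ h₂ l₁ l₂ : H) :
    A.adjointSummand (A.adjointSummand g h₁ h₂) (A.α l₁) (A.α l₂)
      = A.adjointSummand (A.α g) (A.mul h₁ l₁) (A.mul h₂ l₂) := by
  simp only [adjointSummand_apply, A.α.symm_apply_apply]
  rw [A.alpha_symm_mul, A.α.symm_apply_apply, A.alpha_symm_mul, A.S_alpha,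
    A.hom_assoc, ← A.hom_assoc _ (A.α h₂), A.alpha_mul, A.alpha_mul, A.α.apply_symm_apply,
    A.α.apply_symm_apply, A.hom_assoc, A.α.apply_symm_apply, ← A.S_mul, ← A.alpha_mul]

lemma lift_adjointSummand_tmul2 (g : H) (u v : H ⊗[k] H) :
    lift (A.adjointSummand (A.α g)) (tmul2 A.mul A.mul u v)
      = lift (A.adjointSummand (lift (A.adjointSummand g) u))
          (map A.α.toLinearMap A.α.toLinearMap v) := by
  induction v using TensorProduct.induction_on with
  | zero => simp
  | tmul l₁ l₂ =>
    induction u using TensorProduct.induction_on with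
    | zero => simp [adjointSummand_apply]
    | tmul h₁ h₂ =>
      simp only [tmul2_tmul, lift.tmul, map_tmul, LinearEquiv.coe_coe,
        adjointSummand_adjointSummand]
    | add u₁ u₂ h₁ h₂ => simp_all [adjointSummand_apply]
  | add v₁ v₂ h₁ h₂ => simp only [map_add, h₁, h₂]

lemma adRL_alpha (g h : H) : A.α (A.adRL g h) = A.adRL (A.α g) (A.α h) := by
  rw [adRL_eq_lift, adRL_eq_lift, A.comul_alpha, alpha_lift_adjointSummand]

lemma adRL_mul (g h l : H) : A.adRL (A.α g) (A.mul h l) = A.adRL (A.adRL g h) (A.α l) := by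
  rw [adRL_eq_lift, adRL_eq_lift, adRL_eq_lift, A.comul_mul, A.comul_alpha,
    lift_adjointSummand_tmul2]

lemma adRL_one (g : H) : A.adRL g A.one = A.α g := by
  simp [adRL_eq_lift, adjointSummand_apply, A.comul_one, A.S_one, A.alpha_one, A.mul_one',
    A.one_mul']

end MonHomHopf

/-- the right adjoint Hom-action makes `(H,α)` a right Hom-module over itself. -/
theorem right_adjoint_action_right_module {k H : Type*} [CommRing k] [AddCommGroup H] [Module k H]
    (A : MonHomHopf k H) :
    (∀ g h, A.α (A.adRL g h) = A.adRL (A.α g) (A.α h)) ∧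
    (∀ g h l, A.adRL (A.α g) (A.mul h l) = A.adRL (A.adRL g h) (A.α l)) ∧
    (∀ g, A.adRL g A.one = A.α g) :=
  ⟨A.adRL_alpha, A.adRL_mul, A.adRL_one⟩
end

section
/- Let (H,α) be a monoidal Hom-Hopf algebra over a commutative ring k and let (M,μ) be a left-covariant (H,α)-Hom-bimodule with left coaction ρ(m)=m₍₋₁₎⊗m₍₀₎, and set P_L(m)=S(m₍₋₁₎)·m₍₀₎. Then every m∈M satisfies m = m₍₋₁₎·P_L(m₍₀₎). -/
open TensorProduct

/-- A left-covariant `(H,α)`-Hom-bimodule. -/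
structure LeftCovBimod {k H : Type*} [CommRing k] [AddCommGroup H] [Module k H]
    (A : MonHomHopf k H) (M : Type*) [AddCommGroup M] [Module k M] where
  μ : M ≃ₗ[k] M
  lact : H →ₗ[k] M →ₗ[k] M
  ract : M →ₗ[k] H →ₗ[k] M
  lact_assoc : ∀ g h m, lact (A.α g) (lact h m) = lact (A.mul g h) (μ m)
  lact_one : ∀ m, lact A.one m = μ m
  mu_lact : ∀ h m, μ (lact h m) = lact (A.α h) (μ m)
  ract_assoc : ∀ m g h, ract (μ m) (A.mul g h) = ract (ract m g) (A.α h)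
  ract_one : ∀ m, ract m A.one = μ m
  mu_ract : ∀ m h, μ (ract m h) = ract (μ m) (A.α h)
  bimod : ∀ h m g, ract (lact h m) (A.α g) = lact (A.α h) (ract m g)
  rho : M →ₗ[k] H ⊗[k] M
  rho_coassoc : ∀ m,
    (TensorProduct.map (LinearMap.id : H →ₗ[k] H) rho) (rho m)
      = (TensorProduct.assoc k H H M)
          ((TensorProduct.map
              ((TensorProduct.map A.α.toLinearMap (LinearMap.id : H →ₗ[k] H)) ∘ₗ A.comul)
              μ.symm.toLinearMap) (rho m))
  rho_counit : ∀ m,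
    (TensorProduct.lid k M) ((TensorProduct.map A.counit (LinearMap.id : M →ₗ[k] M)) (rho m))
      = μ.symm m
  rho_mu : ∀ m, rho (μ m) = TensorProduct.map A.α.toLinearMap μ.toLinearMap (rho m)
  rho_cov : ∀ h g m,
    rho (ract (lact h m) (A.α g))
      = tmul2 A.mul lact (A.comul (A.α h)) (tmul2 A.mul ract (rho m) (A.comul g))

/-- The projection `P_L(m) = S(m₍₋₁₎) · m₍₀₎`. -/
noncomputable def LeftCovBimod.PL {k H : Type*} [CommRing k] [AddCommGroup H] [Module k H]
    {A : MonHomHopf k H} {M : Type*} [AddCommGroup M] [Module k M]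
    (B : LeftCovBimod A M) : M →ₗ[k] M :=
  (TensorProduct.lift (B.lact ∘ₗ A.S)) ∘ₗ B.rho

/-- every `m` satisfies `m = m₍₋₁₎ · P_L(m₍₀₎)`. -/
theorem PL_reconstruction {k H : Type*} [CommRing k] [AddCommGroup H] [Module k H]
    (A : MonHomHopf k H) {M : Type*} [AddCommGroup M] [Module k M]
    (B : LeftCovBimod A M) :
    ∀ m : M, TensorProduct.lift (B.lact.compl₂ B.PL) (B.rho m) = m := by
  intro m
  set G := TensorProduct.lift (B.lact.compl₂ (TensorProduct.lift (B.lact ∘ₗ A.S))) with hG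
  have h1 : ∀ t : H ⊗[k] M,
      TensorProduct.lift (B.lact.compl₂ B.PL) t
        = G ((TensorProduct.map (LinearMap.id : H →ₗ[k] H) B.rho) t) := by
    intro t
    induction t using TensorProduct.induction_on with
    | zero => simp
    | tmul h n => simp [hG, LeftCovBimod.PL]
    | add x y hx hy => simp [map_add, hx, hy]
  have key : ∀ (u : H ⊗[k] H) (m' : M),
      G ((TensorProduct.assoc k H H M)
        ((TensorProduct.map A.α.toLinearMap (LinearMap.id : H →ₗ[k] H) u) ⊗ₜ[k] m'))
        = B.lact (TensorProduct.lift A.mul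
            ((TensorProduct.map (LinearMap.id : H →ₗ[k] H) A.S) u)) (B.μ m') := by
    intro u m'
    induction u using TensorProduct.induction_on with
    | zero => simp
    | tmul g h => simp [hG, B.lact_assoc]
    | add x y hx hy => simp [add_tmul, map_add, hx, hy]
  have h2 : ∀ t : H ⊗[k] M,
      G ((TensorProduct.assoc k H H M)
          ((TensorProduct.map
              ((TensorProduct.map A.α.toLinearMap (LinearMap.id : H →ₗ[k] H)) ∘ₗ A.comul)
              B.μ.symm.toLinearMap) t))
        = B.μ ((TensorProduct.lid k M)
            ((TensorProduct.map A.counit (LinearMap.id : M →ₗ[k] M)) t)) := by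
    intro t
    induction t using TensorProduct.induction_on with
    | zero => simp
    | tmul h n =>
      have := key (A.comul h) (B.μ.symm n)
      simp only [TensorProduct.map_tmul, LinearMap.coe_comp, Function.comp_apply,
        LinearMap.id_coe, id_eq, LinearEquiv.coe_coe] at this ⊢
      rw [this, B.μ.apply_symm_apply, A.antipode_right]
      simp [B.lact_one]
    | add x y hx hy => simp [map_add, hx, hy]
  rw [h1, B.rho_coassoc, h2, B.rho_counit, B.μ.apply_symm_apply]
end
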